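/- arXiv:2206.10575 — 3 statements merged into one kernel-verified Lean document; each statement's English description precedes it below -/
import Mathlib

section
/- In the ADMM context, suppose in addition that F is ξ-monotone on C_= with constants c > 0 and ξ > 1, i.e., ⟪F x − F x', x − x'⟫ ≥ c‖x − x'‖^ξ for all x, x' ∈ C_=. Let (x^μ, λ^μ) be a KKT point with y^μ = x^μ, and let (x_{k+1}, y_k, y_{k+1}, λ_k, λ_{k+1}) be an ADMM step from (y_k, λ_k), where additionally g(z) ≥ g(y_k) + ⟪λ_k, z − y_k⟫ for all z. Then c‖x_{k+1} − x^μ‖^ξ + ⟪F x^μ, x_{k+1} − x^μ⟫ + g(y_{k+1}) − g(y^μ) + ⟪λ^μ, x_{k+1} − y_{k+1}⟫ ≤ (1/(2β))‖λ_k − λ^μ‖² − (1/(2β))‖λ_{k+1} − λ^μ‖² + (β/2)‖y_k − y^μ‖² − (β/2)‖y_{k+1} − y^μ‖² − (1/(2β))‖λ_{k+1} − λ_k‖² − (β/2)‖y_{k+1} − y_k‖². -/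
/-!
Test the `x`-step variational inequality and the `y`-step subgradient inequality at `x^μ`;
ξ-monotonicity trades `⟪F x_{k+1}, x_{k+1} - x^μ⟫` for `c‖x_{k+1} - x^μ‖^ξ + ⟪F x^μ, x_{k+1} - x^μ⟫`.
Since `λ_{k+1} - λ_k = β (x_{k+1} - y_{k+1})`, the remaining inner products regroup into
`⟪λ^μ - λ_{k+1}, λ_{k+1} - λ_k⟫ / β + β ⟪y_{k+1} - y_k, x^μ - y_{k+1}⟫ - ⟪λ_{k+1} - λ_k, y_{k+1} - y_k⟫`.
The last term is nonpositive by monotonicity of `∂g`, and the three-point identity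
`2⟪a - b, c - a⟫ = ‖b - c‖² - ‖a - c‖² - ‖a - b‖²` turns the other two into the squared norms.
-/

open scoped RealInnerProductSpace

/-- The affine constraint set `C_= = {x | C x = d}`. -/
def CeqSet {n p : ℕ} (C : Matrix (Fin p) (Fin n) ℝ) (d : EuclideanSpace ℝ (Fin p)) :
    Set (EuclideanSpace ℝ (Fin n)) :=
  {x | Matrix.toEuclideanLin C x = d}

/-- `F` is monotone on the set `S`. -/
def MonotoneOnSet {n : ℕ} (F : EuclideanSpace ℝ (Fin n) → EuclideanSpace ℝ (Fin n))
    (S : Set (EuclideanSpace ℝ (Fin n))) : Prop :=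
  ∀ x ∈ S, ∀ x' ∈ S, 0 ≤ ⟪F x - F x', x - x'⟫

/-- A KKT point `(x^μ, λ^μ)`: `x^μ ∈ C_=`, `⟪F x^μ + λ^μ, z − x^μ⟫ ≥ 0` for all `z ∈ C_=`,
and `λ^μ` is a subgradient of `g` at `x^μ`. -/
def IsKKTPoint {n : ℕ} (F : EuclideanSpace ℝ (Fin n) → EuclideanSpace ℝ (Fin n))
    (g : EuclideanSpace ℝ (Fin n) → ℝ) (S : Set (EuclideanSpace ℝ (Fin n)))
    (xμ lamμ : EuclideanSpace ℝ (Fin n)) : Prop :=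
  xμ ∈ S ∧ (∀ z ∈ S, 0 ≤ ⟪F xμ + lamμ, z - xμ⟫) ∧
    (∀ z, g xμ + ⟪lamμ, z - xμ⟫ ≤ g z)

/-- An ADMM step from `(y_k, λ_k)` to `(x_{k+1}, y_{k+1}, λ_{k+1})`. -/
def IsADMMStep {n : ℕ} (F : EuclideanSpace ℝ (Fin n) → EuclideanSpace ℝ (Fin n))
    (g : EuclideanSpace ℝ (Fin n) → ℝ) (β : ℝ) (S : Set (EuclideanSpace ℝ (Fin n)))
    (yk lamk xk1 yk1 lamk1 : EuclideanSpace ℝ (Fin n)) : Prop :=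
  xk1 ∈ S ∧
  (∀ z ∈ S, 0 ≤ ⟪F xk1 + lamk + β • (xk1 - yk), z - xk1⟫) ∧
  (∀ z, g yk1 + ⟪lamk1, z - yk1⟫ ≤ g z) ∧
  lamk1 = lamk + β • (xk1 - yk1)

/-- An ADMM trajectory: sequences `x, y, λ` whose consecutive entries are related by ADMM
steps, with the subgradient property at the initial point `y_0`. -/
def IsADMMTraj {n : ℕ} (F : EuclideanSpace ℝ (Fin n) → EuclideanSpace ℝ (Fin n))
    (g : EuclideanSpace ℝ (Fin n) → ℝ) (β : ℝ) (S : Set (EuclideanSpace ℝ (Fin n)))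
    (x y lam : ℕ → EuclideanSpace ℝ (Fin n)) : Prop :=
  (∀ k, IsADMMStep F g β S (y k) (lam k) (x (k+1)) (y (k+1)) (lam (k+1))) ∧
  (∀ z, g (y 0) + ⟪lam 0, z - y 0⟫ ≤ g z)

section InnerProductSpace

variable {E : Type*} [NormedAddCommGroup E] [InnerProductSpace ℝ E]

theorem two_mul_inner_sub_sub_eq (a b c : E) :
    2 * ⟪a - b, c - a⟫ = ‖b - c‖ ^ 2 - ‖a - c‖ ^ 2 - ‖a - b‖ ^ 2 := by
  simp only [← real_inner_self_eq_norm_sq, inner_sub_left, inner_sub_right, real_inner_comm]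
  ring

theorem inner_sub_sub_nonneg_of_subgradient {g : E → ℝ} {y₁ y₂ u₁ u₂ : E}
    (h₁ : ∀ z, g y₁ + ⟪u₁, z - y₁⟫ ≤ g z) (h₂ : ∀ z, g y₂ + ⟪u₂, z - y₂⟫ ≤ g z) :
    0 ≤ ⟪u₁ - u₂, y₁ - y₂⟫ := by
  have h₁₂ := h₁ y₂
  have h₂₁ := h₂ y₁
  rw [← neg_sub y₁ y₂, inner_neg_right] at h₁₂
  rw [inner_sub_left]
  linarith

theorem admm_step_estimate {F : E → E} {g : E → ℝ} {β : ℝ} (hβ : β ≠ 0)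
    {x y y' u u' v w : E}
    (hx : 0 ≤ ⟪F x + u + β • (x - y), v - x⟫)
    (hy' : ∀ z, g y' + ⟪u', z - y'⟫ ≤ g z) (hy : ∀ z, g y + ⟪u, z - y⟫ ≤ g z)
    (hu' : u' = u + β • (x - y')) :
    ⟪F x, x - v⟫ + g y' - g v + ⟪w, x - y'⟫ ≤
      (1 / (2 * β)) * ‖u - w‖ ^ 2 - (1 / (2 * β)) * ‖u' - w‖ ^ 2
      + (β / 2) * ‖y - v‖ ^ 2 - (β / 2) * ‖y' - v‖ ^ 2
      - (1 / (2 * β)) * ‖u' - u‖ ^ 2 - (β / 2) * ‖y' - y‖ ^ 2 := by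
  have hyv := hy' v
  have hmono := inner_sub_sub_nonneg_of_subgradient hy' hy
  have hxy : x - y' = β⁻¹ • (u' - u) := by
    rw [hu', add_sub_cancel_left, smul_smul, inv_mul_cancel₀ hβ, one_smul]
  have hregroup : ⟪u + β • (x - y), v - x⟫ - ⟪u', v - y'⟫ + ⟪w, x - y'⟫ =
      ⟪w - u', x - y'⟫ + β * ⟪y' - y, v - y'⟫ - ⟪u' - u, y' - y⟫ := by
    subst hu'
    simp only [inner_add_left, inner_sub_left, inner_sub_right, real_inner_smul_right,
      real_inner_comm]
    ring
  calc ⟪F x, x - v⟫ + g y' - g v + ⟪w, x - y'⟫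
      ≤ ⟪w - u', x - y'⟫ + β * ⟪y' - y, v - y'⟫ - ⟪u' - u, y' - y⟫ := by
        rw [add_assoc, inner_add_left] at hx
        rw [← neg_sub v x, inner_neg_right]
        linarith
    _ ≤ ⟪w - u', x - y'⟫ + β * ⟪y' - y, v - y'⟫ := by linarith
    _ = (1 / (2 * β)) * (2 * ⟪u' - u, w - u'⟫) + (β / 2) * (2 * ⟪y' - y, v - y'⟫) := by
        rw [hxy, real_inner_smul_right, real_inner_comm]
        field_simp
    _ = _ := by
        rw [two_mul_inner_sub_sub_eq, two_mul_inner_sub_sub_eq]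
        ring

end InnerProductSpace

theorem stmt_7_general {n p : ℕ} (C : Matrix (Fin p) (Fin n) ℝ) (d : EuclideanSpace ℝ (Fin p))
    (F : EuclideanSpace ℝ (Fin n) → EuclideanSpace ℝ (Fin n))
    (g : EuclideanSpace ℝ (Fin n) → ℝ) (β : ℝ) (hβ : 0 < β)
    (c ξ : ℝ)
    (hF : ∀ x ∈ CeqSet C d, ∀ x' ∈ CeqSet C d, c * ‖x - x'‖ ^ ξ ≤ ⟪F x - F x', x - x'⟫)
    (xk1 yk yk1 lamk lamk1 xμ yμ lamμ : EuclideanSpace ℝ (Fin n))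
    (hKKT : IsKKTPoint F g (CeqSet C d) xμ lamμ) (hyμ : yμ = xμ)
    (hstep : IsADMMStep F g β (CeqSet C d) yk lamk xk1 yk1 lamk1)
    (hgk : ∀ z, g yk + ⟪lamk, z - yk⟫ ≤ g z) :
    c * ‖xk1 - xμ‖ ^ ξ + ⟪F xμ, xk1 - xμ⟫ + g yk1 - g yμ + ⟪lamμ, xk1 - yk1⟫ ≤
      (1 / (2 * β)) * ‖lamk - lamμ‖ ^ 2 - (1 / (2 * β)) * ‖lamk1 - lamμ‖ ^ 2
      + (β / 2) * ‖yk - yμ‖ ^ 2 - (β / 2) * ‖yk1 - yμ‖ ^ 2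
      - (1 / (2 * β)) * ‖lamk1 - lamk‖ ^ 2 - (β / 2) * ‖yk1 - yk‖ ^ 2 := by
  obtain ⟨hxμ, -, -⟩ := hKKT
  obtain ⟨hxk1, hxstep, hystep, hdual⟩ := hstep
  subst yμ
  have hstrong := hF xk1 hxk1 xμ hxμ
  have hestimate := admm_step_estimate (w := lamμ) hβ.ne' (hxstep xμ hxμ) hystep hgk hdual
  rw [inner_sub_left] at hstrong
  linarith

/-- Lemma 3.6, second inequality, under ξ-monotonicity. -/
theorem stmt_7 {n p : ℕ} (C : Matrix (Fin p) (Fin n) ℝ) (d : EuclideanSpace ℝ (Fin p))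
    (F : EuclideanSpace ℝ (Fin n) → EuclideanSpace ℝ (Fin n))
    (g : EuclideanSpace ℝ (Fin n) → ℝ) (β : ℝ) (hβ : 0 < β)
    (c ξ : ℝ) (hc : 0 < c) (hξ : 1 < ξ)
    (hF : ∀ x ∈ CeqSet C d, ∀ x' ∈ CeqSet C d, c * ‖x - x'‖ ^ ξ ≤ ⟪F x - F x', x - x'⟫)
    (xk1 yk yk1 lamk lamk1 xμ yμ lamμ : EuclideanSpace ℝ (Fin n))
    (hKKT : IsKKTPoint F g (CeqSet C d) xμ lamμ) (hyμ : yμ = xμ)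
    (hstep : IsADMMStep F g β (CeqSet C d) yk lamk xk1 yk1 lamk1)
    (hgk : ∀ z, g yk + ⟪lamk, z - yk⟫ ≤ g z) :
    c * ‖xk1 - xμ‖ ^ ξ + ⟪F xμ, xk1 - xμ⟫ + g yk1 - g yμ + ⟪lamμ, xk1 - yk1⟫ ≤
      (1 / (2 * β)) * ‖lamk - lamμ‖ ^ 2 - (1 / (2 * β)) * ‖lamk1 - lamμ‖ ^ 2
      + (β / 2) * ‖yk - yμ‖ ^ 2 - (β / 2) * ‖yk1 - yμ‖ ^ 2
      - (1 / (2 * β)) * ‖lamk1 - lamk‖ ^ 2 - (β / 2) * ‖yk1 - yk‖ ^ 2 :=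
  stmt_7_general C d F g β hβ c ξ hF xk1 yk yk1 lamk lamk1 xμ yμ lamμ hKKT hyμ hstep hgk
end

section
/- In the ADMM context, suppose F is monotone on C_=, let (x^μ, λ^μ) be a KKT point with y^μ = x^μ, let (x_k)_{k≥1}, (y_k)_{k≥0}, (λ_k)_{k≥0} be an ADMM trajectory, and set Δ = (1/β)‖λ_0 − λ^μ‖² + β‖y_0 − y^μ‖². Then for every K ≥ 0: ‖x_{K+1} − y_{K+1}‖ ≤ √(Δ/(β(K+1))), ‖y_{K+1} − y_K‖ ≤ √(Δ/(β(K+1))), ‖λ_{K+1} − λ^μ‖ ≤ √(βΔ), and ‖y_{K+1} − y^μ‖ ≤ √(Δ/β). -/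
open scoped RealInnerProductSpace

/-
The iterates are compared with the KKT point through the Lyapunov quantity
`W_k = ‖λ_k − λ^μ‖² + β² ‖y_k − y^μ‖²`. Monotonicity of the subdifferential of `g` and of `F`
on `C_=` (entering through the two variational inequalities) shows that one ADMM step decreases
`W` by at least `β² (‖x_{k+1} − y_{k+1}‖² + ‖y_{k+1} − y_k‖²)`, and that this decrease is itself
nonincreasing in `k`. Telescoping gives
`W_{K+1} + (K+1) β² (‖x_{K+1} − y_{K+1}‖² + ‖y_{K+1} − y_K‖²) ≤ W_0 = β Δ`,
from which all four bounds are read off.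
-/

section InnerProductSpace

variable {E : Type*} [NormedAddCommGroup E] [InnerProductSpace ℝ E]

theorem inner_sub_nonneg_of_subgradient {g : E → ℝ} {y₁ y₂ a₁ a₂ : E}
    (h₁ : ∀ z, g y₁ + ⟪a₁, z - y₁⟫ ≤ g z) (h₂ : ∀ z, g y₂ + ⟪a₂, z - y₂⟫ ≤ g z) :
    0 ≤ ⟪a₁ - a₂, y₁ - y₂⟫ := by
  have h₁₂ := h₁ y₂
  have h₂₁ := h₂ y₁
  rw [← neg_sub y₁ y₂, inner_neg_right] at h₁₂
  rw [inner_sub_left]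
  linarith

theorem norm_sq_le_add_of_inner_nonneg {u w s : E} (h : 0 ≤ ⟪u - w, w - s⟫) :
    ‖w‖ ^ 2 ≤ ‖u‖ ^ 2 + ‖s‖ ^ 2 := by
  have hsq : 0 ≤ ‖u + s - w‖ ^ 2 := sq_nonneg _
  simp only [← real_inner_self_eq_norm_sq] at *
  simp only [inner_add_left, inner_add_right, inner_sub_left, inner_sub_right] at *
  linarith [real_inner_comm u w, real_inner_comm u s, real_inner_comm s w]

theorem norm_sq_add_norm_sq_le_of_inner_nonneg {v t : E} (h : 0 ≤ ⟪v, t⟫) :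
    ‖v‖ ^ 2 + ‖t‖ ^ 2 ≤ ‖v + t‖ ^ 2 := by
  rw [norm_add_sq_real]
  linarith

/- In the ADMM step, `L = λ_k − λ^μ`, `r = x_{k+1} − y_{k+1}`, `D = y_{k+1} − y_k` and
`Y = y_{k+1} − y^μ`. -/
theorem lyapunov_step_le {β : ℝ} (hβ : 0 < β) {L r D Y : E}
    (hA : ⟪L + β • (r + D), Y + r⟫ ≤ 0) (hB : 0 ≤ ⟪L + β • r, Y⟫) (hrD : 0 ≤ ⟪r, D⟫) :
    ‖L + β • r‖ ^ 2 + β ^ 2 * ‖Y‖ ^ 2 + β ^ 2 * (‖r‖ ^ 2 + ‖D‖ ^ 2)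
      ≤ ‖L‖ ^ 2 + β ^ 2 * ‖Y - D‖ ^ 2 := by
  simp only [← real_inner_self_eq_norm_sq] at *
  simp only [inner_add_left, inner_add_right, inner_sub_left, inner_sub_right,
    real_inner_smul_left, real_inner_smul_right] at *
  nlinarith [real_inner_comm L r, real_inner_comm D Y, real_inner_comm r Y, real_inner_comm r D,
    mul_nonneg hβ.le hB, mul_nonneg (sq_nonneg β) hrD]

end InnerProductSpace

theorem add_mul_le_of_succ_add_le {W f : ℕ → ℝ} (hW : ∀ k, W (k + 1) + f k ≤ W k)
    (hf : Antitone f) (K : ℕ) : W (K + 1) + (K + 1) * f K ≤ W 0 := by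
  induction K with
  | zero => simpa using hW 0
  | succ K ih =>
    have hfK : (K + 1 : ℝ) * f (K + 1) ≤ (K + 1) * f K :=
      mul_le_mul_of_nonneg_left (hf K.le_succ) (by positivity)
    push_cast
    linarith [hW (K + 1)]

section ADMM

variable {n : ℕ} {F : EuclideanSpace ℝ (Fin n) → EuclideanSpace ℝ (Fin n)}
  {g : EuclideanSpace ℝ (Fin n) → ℝ} {β : ℝ} {S : Set (EuclideanSpace ℝ (Fin n))}
  {y lam x' y' lam' : EuclideanSpace ℝ (Fin n)}

theorem MonotoneOnSet.inner_sub_nonpos_of_variationalIneq (hF : MonotoneOnSet F S)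
    {x₁ x₂ a₁ a₂ : EuclideanSpace ℝ (Fin n)} (hx₁ : x₁ ∈ S) (hx₂ : x₂ ∈ S)
    (h₁ : ∀ z ∈ S, 0 ≤ ⟪F x₁ + a₁, z - x₁⟫) (h₂ : ∀ z ∈ S, 0 ≤ ⟪F x₂ + a₂, z - x₂⟫) :
    ⟪a₁ - a₂, x₁ - x₂⟫ ≤ 0 := by
  have h₁₂ := h₁ x₂ hx₂
  have h₂₁ := h₂ x₁ hx₁
  have hmono := hF x₁ hx₁ x₂ hx₂
  rw [← neg_sub x₁ x₂, inner_neg_right] at h₁₂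
  simp only [inner_add_left, inner_sub_left] at *
  linarith

theorem IsADMMStep.inner_residual_nonneg (hβ : 0 < β)
    (hstep : IsADMMStep F g β S y lam x' y' lam') (hy : ∀ z, g y + ⟪lam, z - y⟫ ≤ g z) :
    0 ≤ ⟪x' - y', y' - y⟫ := by
  obtain ⟨-, -, hy', hlam'⟩ := hstep
  have h := inner_sub_nonneg_of_subgradient hy' hy
  rw [hlam', add_sub_cancel_left, real_inner_smul_left] at h
  exact (mul_nonneg_iff_of_pos_left hβ).mp h

theorem IsADMMStep.variationalIneq (hstep : IsADMMStep F g β S y lam x' y' lam') :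
    ∀ z ∈ S, 0 ≤ ⟪F x' + (lam + β • (x' - y)), z - x'⟫ := fun z hz => by
  rw [← add_assoc]
  exact hstep.2.1 z hz

theorem IsADMMStep.lyapunov_le (hβ : 0 < β) (hF : MonotoneOnSet F S)
    {xμ lamμ : EuclideanSpace ℝ (Fin n)} (hKKT : IsKKTPoint F g S xμ lamμ)
    (hstep : IsADMMStep F g β S y lam x' y' lam') (hy : ∀ z, g y + ⟪lam, z - y⟫ ≤ g z) :
    ‖lam' - lamμ‖ ^ 2 + β ^ 2 * ‖y' - xμ‖ ^ 2 + β ^ 2 * (‖x' - y'‖ ^ 2 + ‖y' - y‖ ^ 2)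
      ≤ ‖lam - lamμ‖ ^ 2 + β ^ 2 * ‖y - xμ‖ ^ 2 := by
  have hrD := hstep.inner_residual_nonneg hβ hy
  have hA :=
    hF.inner_sub_nonpos_of_variationalIneq hstep.1 hKKT.1 hstep.variationalIneq hKKT.2.1
  have hB := inner_sub_nonneg_of_subgradient hstep.2.2.1 hKKT.2.2
  obtain ⟨-, -, -, rfl⟩ := hstep
  have hdual : lam + β • (x' - y') - lamμ = (lam - lamμ) + β • (x' - y') := by abel
  have hprimal : y - xμ = (y' - xμ) - (y' - y) := by abel
  rw [hdual, hprimal]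
  refine lyapunov_step_le hβ ?_ (hdual ▸ hB) hrD
  have ha : (lam - lamμ) + β • ((x' - y') + (y' - y)) = lam + β • (x' - y) - lamμ := by module
  have hx : (y' - xμ) + (x' - y') = x' - xμ := by abel
  rwa [ha, hx]

theorem IsADMMStep.residual_le (hβ : 0 < β) (hF : MonotoneOnSet F S)
    {x'' y'' lam'' : EuclideanSpace ℝ (Fin n)}
    (hstep₁ : IsADMMStep F g β S y lam x' y' lam')
    (hstep₂ : IsADMMStep F g β S y' lam' x'' y'' lam'') :
    ‖x'' - y''‖ ^ 2 + ‖y'' - y'‖ ^ 2 ≤ ‖x' - y'‖ ^ 2 + ‖y' - y‖ ^ 2 := by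
  have hrD := hstep₂.inner_residual_nonneg hβ hstep₁.2.2.1
  have hQ := hF.inner_sub_nonpos_of_variationalIneq hstep₁.1 hstep₂.1 hstep₁.variationalIneq
    hstep₂.variationalIneq
  obtain ⟨-, -, -, rfl⟩ := hstep₁
  have hQ' :
      0 ≤ ⟪(y' - y) - ((x'' - y'') + (y'' - y')), ((x'' - y'') + (y'' - y')) - (x' - y')⟫ := by
    have e₁ : lam + β • (x' - y) - (lam + β • (x' - y') + β • (x'' - y'))
        = β • ((y' - y) - ((x'' - y'') + (y'' - y'))) := by module
    have e₂ : x' - x'' = -(((x'' - y'') + (y'' - y')) - (x' - y')) := by abel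
    rw [e₁, e₂, inner_neg_right, real_inner_smul_left, neg_nonpos] at hQ
    exact (mul_nonneg_iff_of_pos_left hβ).mp hQ
  calc ‖x'' - y''‖ ^ 2 + ‖y'' - y'‖ ^ 2 ≤ ‖(x'' - y'') + (y'' - y')‖ ^ 2 :=
        norm_sq_add_norm_sq_le_of_inner_nonneg hrD
    _ ≤ ‖y' - y‖ ^ 2 + ‖x' - y'‖ ^ 2 := norm_sq_le_add_of_inner_nonneg hQ'
    _ = ‖x' - y'‖ ^ 2 + ‖y' - y‖ ^ 2 := add_comm _ _

namespace IsADMMTraj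

variable {x y lam : ℕ → EuclideanSpace ℝ (Fin n)}

theorem subgradient (htraj : IsADMMTraj F g β S x y lam) :
    ∀ k z, g (y k) + ⟪lam k, z - y k⟫ ≤ g z
  | 0 => htraj.2
  | k + 1 => (htraj.1 k).2.2.1

theorem lyapunov_add_mul_residual_le (htraj : IsADMMTraj F g β S x y lam) (hβ : 0 < β)
    (hF : MonotoneOnSet F S) {xμ lamμ : EuclideanSpace ℝ (Fin n)}
    (hKKT : IsKKTPoint F g S xμ lamμ) (K : ℕ) :
    ‖lam (K + 1) - lamμ‖ ^ 2 + β ^ 2 * ‖y (K + 1) - xμ‖ ^ 2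
        + (K + 1) * (β ^ 2 * (‖x (K + 1) - y (K + 1)‖ ^ 2 + ‖y (K + 1) - y K‖ ^ 2))
      ≤ ‖lam 0 - lamμ‖ ^ 2 + β ^ 2 * ‖y 0 - xμ‖ ^ 2 := by
  refine add_mul_le_of_succ_add_le (W := fun k => ‖lam k - lamμ‖ ^ 2 + β ^ 2 * ‖y k - xμ‖ ^ 2)
    (fun k => (htraj.1 k).lyapunov_le hβ hF hKKT (htraj.subgradient k)) ?_ K
  refine antitone_nat_of_succ_le fun k => mul_le_mul_of_nonneg_left ?_ (sq_nonneg β)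
  exact (htraj.1 k).residual_le hβ hF (htraj.1 (k + 1))

end IsADMMTraj

end ADMM

/-- Theorem 3.2: residual and boundedness estimates. -/
theorem stmt_12 {n p : ℕ} (C : Matrix (Fin p) (Fin n) ℝ) (d : EuclideanSpace ℝ (Fin p))
    (F : EuclideanSpace ℝ (Fin n) → EuclideanSpace ℝ (Fin n))
    (g : EuclideanSpace ℝ (Fin n) → ℝ) (β : ℝ) (hβ : 0 < β)
    (hF : MonotoneOnSet F (CeqSet C d))
    (xμ yμ lamμ : EuclideanSpace ℝ (Fin n))
    (hKKT : IsKKTPoint F g (CeqSet C d) xμ lamμ) (hyμ : yμ = xμ)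
    (x y lam : ℕ → EuclideanSpace ℝ (Fin n))
    (htraj : IsADMMTraj F g β (CeqSet C d) x y lam)
    (Δ : ℝ) (hΔ : Δ = (1 / β) * ‖lam 0 - lamμ‖ ^ 2 + β * ‖y 0 - yμ‖ ^ 2) :
    ∀ K : ℕ,
      ‖x (K+1) - y (K+1)‖ ≤ Real.sqrt (Δ / (β * (K + 1))) ∧
      ‖y (K+1) - y K‖ ≤ Real.sqrt (Δ / (β * (K + 1))) ∧
      ‖lam (K+1) - lamμ‖ ≤ Real.sqrt (β * Δ) ∧
      ‖y (K+1) - yμ‖ ≤ Real.sqrt (Δ / β) := by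
  subst hyμ
  intro K
  have hbound := htraj.lyapunov_add_mul_residual_le hβ hF hKKT K
  have hW₀ : ‖lam 0 - lamμ‖ ^ 2 + β ^ 2 * ‖y 0 - yμ‖ ^ 2 = β * Δ := by
    rw [hΔ]
    field_simp
  rw [hW₀] at hbound
  have hK : (0 : ℝ) < K + 1 := by positivity
  have hlam := sq_nonneg ‖lam (K + 1) - lamμ‖
  have hy := mul_nonneg (sq_nonneg β) (sq_nonneg ‖y (K + 1) - yμ‖)
  have hr := mul_nonneg hK.le (mul_nonneg (sq_nonneg β) (sq_nonneg ‖x (K + 1) - y (K + 1)‖))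
  have hΔy := mul_nonneg hK.le (mul_nonneg (sq_nonneg β) (sq_nonneg ‖y (K + 1) - y K‖))
  refine ⟨Real.le_sqrt_of_sq_le ?_, Real.le_sqrt_of_sq_le ?_, Real.le_sqrt_of_sq_le ?_,
    Real.le_sqrt_of_sq_le ?_⟩
  · rw [le_div_iff₀ (by positivity)]
    refine le_of_mul_le_mul_left ?_ hβ
    linear_combination hbound + hlam + hy + hΔy
  · rw [le_div_iff₀ (by positivity)]
    refine le_of_mul_le_mul_left ?_ hβ
    linear_combination hbound + hlam + hy + hr
  · linear_combination hbound + hy + hr + hΔy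
  · rw [le_div_iff₀ hβ]
    refine le_of_mul_le_mul_left ?_ hβ
    linear_combination hbound + hlam + hr + hΔy
end

section
/- In the ADMM context, suppose F is monotone on C_=, let (x^μ, λ^μ) be a KKT point with y^μ = x^μ, let (x_k)_{k≥1}, (y_k)_{k≥0}, (λ_k)_{k≥0} be an ADMM trajectory, and set Δ = (1/β)‖λ_0 − λ^μ‖² + β‖y_0 − y^μ‖². Then for every K ≥ 0: −‖λ^μ‖·√(Δ/(β(K+1))) ≤ ⟪F x^μ, x_{K+1} − x^μ⟫ + g(y_{K+1}) − g(y^μ) ≤ ⟪F x_{K+1}, x_{K+1} − x^μ⟫ + g(y_{K+1}) − g(y^μ) ≤ Δ/(K+1) + 2Δ/√(K+1) + ‖λ^μ‖·√(Δ/(β(K+1))). -/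
/-!
A KKT point is a fixed point of the ADMM map, and any two ADMM steps contract
`‖λ - λ'‖² + β²‖y - y'‖²` (firm nonexpansiveness: monotonicity of `F` enters through the
x-steps, monotonicity of the subdifferential of `g` through the y-steps). Comparing with the
fixed point gives the Fejér descent `W (k+1) + R k ≤ W k`, where `W k` is the squared distance of
`(λ_k, y_k)` to `(λ^μ, y^μ)` and `R k = ‖λ_{k+1} - λ_k‖² + β²‖y_{k+1} - y_k‖²`; comparing
consecutive steps shows that `R` is nonincreasing. Hence `(K+1) R K ≤ W 0 = βΔ`, so the
residuals at step `K` are `O(√(Δ/(β(K+1))))`, and both bounds on the gap follow from the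
optimality conditions at `x_{K+1}`, `y_{K+1}` and Cauchy–Schwarz.
-/

open scoped RealInnerProductSpace

section InnerProduct

variable {V : Type*} [NormedAddCommGroup V] [InnerProductSpace ℝ V]

/-- The metric on pairs `(λ, y)` in which ADMM is firmly nonexpansive. -/
def admmNormSq (β : ℝ) (u v : V) : ℝ := ‖u‖ ^ 2 + β ^ 2 * ‖v‖ ^ 2

omit [InnerProductSpace ℝ V] in
lemma admmNormSq_nonneg (β : ℝ) (u v : V) : 0 ≤ admmNormSq β u v := by
  unfold admmNormSq; positivity

omit [InnerProductSpace ℝ V] in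
lemma norm_le_sqrt_of_admmNormSq_le {β c : ℝ} {u v : V} (h : admmNormSq β u v ≤ c) :
    ‖u‖ ≤ √c ∧ β * ‖v‖ ≤ √c := by
  unfold admmNormSq at h
  constructor <;> apply Real.le_sqrt_of_sq_le <;> nlinarith [sq_nonneg ‖u‖, sq_nonneg ‖v‖]

lemma inner_sub_nonneg_of_subgradient_s13 {g : V → ℝ} {a b y y' : V}
    (ha : ∀ z, g y + ⟪a, z - y⟫ ≤ g z) (hb : ∀ z, g y' + ⟪b, z - y'⟫ ≤ g z) :
    0 ≤ ⟪a - b, y - y'⟫ := by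
  have h₁ := ha y'
  have h₂ := hb y
  rw [← neg_sub y y', inner_neg_right] at h₁
  rw [inner_sub_left]
  linarith

lemma admmNormSq_le_norm_add_smul_sq {β : ℝ} {u v : V} (huv : 0 ≤ β * ⟪u, v⟫) :
    admmNormSq β u v ≤ ‖u + β • v‖ ^ 2 := by
  rw [admmNormSq, norm_add_sq_real, real_inner_smul_right, norm_smul, mul_pow,
    Real.norm_eq_abs, sq_abs]
  linarith

/-- The defect `admmNormSq β u₀ v₀ - admmNormSq β u v - ‖(u - u₀) + β • (v - v₀)‖ ^ 2` is
exactly `2 ⟪u + β • (v - v₀), -(β • v) - (u - u₀)⟫ + 2 β ⟪u, v⟫`. -/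
lemma admmNormSq_add_norm_sq_le {β : ℝ} {u u₀ v v₀ : V}
    (h : 0 ≤ ⟪u + β • (v - v₀), -(β • v) - (u - u₀)⟫) (huv : 0 ≤ β * ⟪u, v⟫) :
    admmNormSq β u v + ‖(u - u₀) + β • (v - v₀)‖ ^ 2 ≤ admmNormSq β u₀ v₀ := by
  obtain ⟨A, rfl⟩ : ∃ A, u₀ = u - A := ⟨u - u₀, (sub_sub_cancel u u₀).symm⟩
  obtain ⟨B, rfl⟩ : ∃ B, v₀ = v - B := ⟨v - v₀, (sub_sub_cancel v v₀).symm⟩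
  simp only [sub_sub_cancel] at h ⊢
  simp only [inner_add_left, inner_sub_right, inner_neg_right, real_inner_smul_left,
    real_inner_smul_right] at h
  rw [real_inner_comm v B, real_inner_comm A B] at h
  rw [admmNormSq, admmNormSq, norm_sub_sq_real u A, norm_sub_sq_real v B, norm_add_sq_real,
    norm_smul, mul_pow, Real.norm_eq_abs, sq_abs, real_inner_smul_right]
  linear_combination 2 * h + 2 * huv

end InnerProduct

lemma add_mul_le_of_antitone {W R : ℕ → ℝ} (hW : ∀ k, W (k + 1) + R k ≤ W k)
    (hR : Antitone R) (K : ℕ) : W (K + 1) + (K + 1) * R K ≤ W 0 := by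
  induction K with
  | zero => simpa using hW 0
  | succ K ih =>
    have hRK := hR K.le_succ
    have hWK := hW (K + 1)
    push_cast
    nlinarith

section ADMM

variable {n : ℕ} {F : EuclideanSpace ℝ (Fin n) → EuclideanSpace ℝ (Fin n)}
  {g : EuclideanSpace ℝ (Fin n) → ℝ} {β : ℝ} {S : Set (EuclideanSpace ℝ (Fin n))}
  {xμ lamμ : EuclideanSpace ℝ (Fin n)}

lemma MonotoneOnSet.inner_sub_nonneg (hF : MonotoneOnSet F S)
    {x x' q q' : EuclideanSpace ℝ (Fin n)} (hx : x ∈ S) (hx' : x' ∈ S)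
    (h : ∀ z ∈ S, 0 ≤ ⟪F x + q, z - x⟫) (h' : ∀ z ∈ S, 0 ≤ ⟪F x' + q', z - x'⟫) :
    0 ≤ ⟪q - q', x' - x⟫ := by
  have h₁ := h x' hx'
  have h₂ := h' x hx
  have h₃ := hF x hx x' hx'
  rw [← neg_sub x' x, inner_neg_right] at h₂ h₃
  simp only [inner_add_left, inner_sub_left] at h₁ h₂ h₃ ⊢
  linarith

lemma IsKKTPoint.isADMMStep (h : IsKKTPoint F g S xμ lamμ) :
    IsADMMStep F g β S xμ lamμ xμ xμ lamμ := by
  obtain ⟨hS, hVI, hg⟩ := h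
  exact ⟨hS, by simpa using hVI, hg, by simp⟩

lemma IsADMMStep.admmNormSq_add_le (hβ : 0 ≤ β) (hF : MonotoneOnSet F S)
    {y lam x₁ y₁ lam₁ y' lam' x₁' y₁' lam₁' : EuclideanSpace ℝ (Fin n)}
    (h : IsADMMStep F g β S y lam x₁ y₁ lam₁) (h' : IsADMMStep F g β S y' lam' x₁' y₁' lam₁') :
    admmNormSq β (lam₁ - lam₁') (y₁ - y₁')
        + ‖(lam₁ - lam₁') - (lam - lam') + β • ((y₁ - y₁') - (y - y'))‖ ^ 2
      ≤ admmNormSq β (lam - lam') (y - y') := by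
  obtain ⟨hx, hvi, hg, rfl⟩ := h
  obtain ⟨hx', hvi', hg', rfl⟩ := h'
  refine admmNormSq_add_norm_sq_le ?_ (mul_nonneg hβ (inner_sub_nonneg_of_subgradient_s13 hg hg'))
  have hq := hF.inner_sub_nonneg hx hx' (by simpa only [add_assoc] using hvi)
    (by simpa only [add_assoc] using hvi')
  have hβq := mul_nonneg hβ hq
  rw [← real_inner_smul_right] at hβq
  have e₁ : lam + β • (x₁ - y₁) - (lam' + β • (x₁' - y₁')) + β • (y₁ - y₁' - (y - y'))
      = lam + β • (x₁ - y) - (lam' + β • (x₁' - y')) := by module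
  have e₂ : -(β • (y₁ - y₁')) - (lam + β • (x₁ - y₁) - (lam' + β • (x₁' - y₁')) - (lam - lam'))
      = β • (x₁' - x₁) := by module
  rwa [e₁, e₂]

lemma IsADMMTraj.subgradient_s13 {x y lam : ℕ → EuclideanSpace ℝ (Fin n)}
    (h : IsADMMTraj F g β S x y lam) : ∀ k z, g (y k) + ⟪lam k, z - y k⟫ ≤ g z
  | 0 => h.2
  | k + 1 => (h.1 k).2.2.1

lemma IsKKTPoint.inner_le_gap (h : IsKKTPoint F g S xμ lamμ) {x : EuclideanSpace ℝ (Fin n)}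
    (hx : x ∈ S) (y : EuclideanSpace ℝ (Fin n)) :
    ⟪lamμ, y - x⟫ ≤ ⟪F xμ, x - xμ⟫ + g y - g xμ := by
  have hVI := h.2.1 x hx
  have hg := h.2.2 y
  rw [← sub_sub_sub_cancel_right y x xμ, inner_sub_right]
  rw [inner_add_left] at hVI
  linarith

lemma IsADMMStep.gap_le {y lam x₁ y₁ lam₁ : EuclideanSpace ℝ (Fin n)}
    (h : IsADMMStep F g β S y lam x₁ y₁ lam₁) (hxμ : xμ ∈ S) :
    ⟪F x₁, x₁ - xμ⟫ + g y₁ - g xμ ≤ ⟪lam₁, y₁ - x₁⟫ + β * ⟪y₁ - y, xμ - x₁⟫ := by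
  obtain ⟨-, hvi, hg, hlam⟩ := h
  have hVI := hvi xμ hxμ
  have hG := hg xμ
  have hsplit : F x₁ + lam + β • (x₁ - y) = F x₁ + lam₁ + β • (y₁ - y) := by
    rw [hlam]; module
  rw [hsplit, inner_add_left, inner_add_left, real_inner_smul_left] at hVI
  rw [← neg_sub xμ x₁, inner_neg_right, ← sub_sub_sub_cancel_left x₁ y₁ xμ,
    inner_sub_right lam₁]
  linarith

variable {x y lam : ℕ → EuclideanSpace ℝ (Fin n)}

lemma IsADMMTraj.admmNormSq_succ_add_le (hβ : 0 ≤ β) (hF : MonotoneOnSet F S)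
    (h : IsADMMTraj F g β S x y lam) (hKKT : IsKKTPoint F g S xμ lamμ) (k : ℕ) :
    admmNormSq β (lam (k + 1) - lamμ) (y (k + 1) - xμ)
        + admmNormSq β (lam (k + 1) - lam k) (y (k + 1) - y k)
      ≤ admmNormSq β (lam k - lamμ) (y k - xμ) := by
  have hstep := (h.1 k).admmNormSq_add_le hβ hF (hKKT.isADMMStep (β := β))
  simp only [sub_sub_sub_cancel_right] at hstep
  have hres := admmNormSq_le_norm_add_smul_sq
    (mul_nonneg hβ (inner_sub_nonneg_of_subgradient_s13 (h.subgradient_s13 (k + 1)) (h.subgradient_s13 k)))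
  linarith

lemma IsADMMTraj.antitone_admmNormSq_sub (hβ : 0 ≤ β) (hF : MonotoneOnSet F S)
    (h : IsADMMTraj F g β S x y lam) :
    Antitone fun k ↦ admmNormSq β (lam (k + 1) - lam k) (y (k + 1) - y k) :=
  antitone_nat_of_succ_le fun k ↦
    (le_add_of_nonneg_right (sq_nonneg _)).trans ((h.1 (k + 1)).admmNormSq_add_le hβ hF (h.1 k))

lemma IsADMMTraj.admmNormSq_add_mul_le (hβ : 0 ≤ β) (hF : MonotoneOnSet F S)
    (h : IsADMMTraj F g β S x y lam) (hKKT : IsKKTPoint F g S xμ lamμ) (K : ℕ) :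
    admmNormSq β (lam (K + 1) - lamμ) (y (K + 1) - xμ)
        + (K + 1) * admmNormSq β (lam (K + 1) - lam K) (y (K + 1) - y K)
      ≤ admmNormSq β (lam 0 - lamμ) (y 0 - xμ) :=
  add_mul_le_of_antitone (W := fun k ↦ admmNormSq β (lam k - lamμ) (y k - xμ))
    (h.admmNormSq_succ_add_le hβ hF hKKT) (h.antitone_admmNormSq_sub hβ hF) K

lemma IsADMMTraj.norm_sub_le_sqrt (hβ : 0 < β) (hF : MonotoneOnSet F S)
    (h : IsADMMTraj F g β S x y lam) (hKKT : IsKKTPoint F g S xμ lamμ) {Δ : ℝ}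
    (hΔ : admmNormSq β (lam 0 - lamμ) (y 0 - xμ) ≤ β * Δ) (K : ℕ) :
    ‖lam (K + 1) - lamμ‖ ≤ √(β * Δ) ∧ β * ‖y (K + 1) - xμ‖ ≤ √(β * Δ) ∧
      ‖y (K + 1) - x (K + 1)‖ ≤ √(Δ / (β * (K + 1))) ∧
      ‖y (K + 1) - y K‖ ≤ √(Δ / (β * (K + 1))) := by
  have hsum := h.admmNormSq_add_mul_le hβ.le hF hKKT K
  have hN : (0 : ℝ) < K + 1 := by positivity
  have hR₀ := admmNormSq_nonneg β (lam (K + 1) - lam K) (y (K + 1) - y K)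
  have hR : admmNormSq β (lam (K + 1) - lam K) (y (K + 1) - y K) ≤ β * Δ / (K + 1) := by
    rw [le_div_iff₀ hN]; linarith [admmNormSq_nonneg β (lam (K + 1) - lamμ) (y (K + 1) - xμ)]
  obtain ⟨hlam, hy⟩ := norm_le_sqrt_of_admmNormSq_le (c := β * Δ)
    (u := lam (K + 1) - lamμ) (v := y (K + 1) - xμ) (by nlinarith [mul_nonneg hN.le hR₀])
  obtain ⟨he, hd⟩ := norm_le_sqrt_of_admmNormSq_le hR
  have hs : √(β * Δ / (K + 1)) = β * √(Δ / (β * (K + 1))) := by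
    rw [show β * Δ / (K + 1) = β ^ 2 * (Δ / (β * (K + 1))) by field_simp,
      Real.sqrt_mul (sq_nonneg β), Real.sqrt_sq hβ.le]
  have hdual : ‖lam (K + 1) - lam K‖ = β * ‖y (K + 1) - x (K + 1)‖ := by
    rw [(h.1 K).2.2.2, add_sub_cancel_left, norm_smul, Real.norm_of_nonneg hβ.le, norm_sub_rev]
  rw [hs, hdual] at he
  rw [hs] at hd
  exact ⟨hlam, hy, le_of_mul_le_mul_left he hβ, le_of_mul_le_mul_left hd hβ⟩

lemma IsADMMTraj.neg_le_gap (hβ : 0 < β) (hF : MonotoneOnSet F S)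
    (h : IsADMMTraj F g β S x y lam) (hKKT : IsKKTPoint F g S xμ lamμ) {Δ : ℝ}
    (hΔ : admmNormSq β (lam 0 - lamμ) (y 0 - xμ) ≤ β * Δ) (K : ℕ) :
    -(‖lamμ‖ * √(Δ / (β * (K + 1)))) ≤ ⟪F xμ, x (K + 1) - xμ⟫ + g (y (K + 1)) - g xμ := by
  obtain ⟨-, -, hyx, -⟩ := h.norm_sub_le_sqrt hβ hF hKKT hΔ K
  calc -(‖lamμ‖ * √(Δ / (β * (K + 1))))
      ≤ -(‖lamμ‖ * ‖y (K + 1) - x (K + 1)‖) := by gcongr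
    _ ≤ ⟪lamμ, y (K + 1) - x (K + 1)⟫ := neg_le_of_abs_le (abs_real_inner_le_norm _ _)
    _ ≤ _ := hKKT.inner_le_gap (h.1 K).1 _

lemma IsADMMTraj.gap_le (hβ : 0 < β) (hF : MonotoneOnSet F S)
    (h : IsADMMTraj F g β S x y lam) (hKKT : IsKKTPoint F g S xμ lamμ) {Δ : ℝ}
    (hΔ : admmNormSq β (lam 0 - lamμ) (y 0 - xμ) ≤ β * Δ) (K : ℕ) :
    ⟪F (x (K + 1)), x (K + 1) - xμ⟫ + g (y (K + 1)) - g xμ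
      ≤ Δ / (K + 1) + 2 * Δ / √(K + 1) + ‖lamμ‖ * √(Δ / (β * (K + 1))) := by
  obtain ⟨hlam, hy, hyx, hd⟩ := h.norm_sub_le_sqrt hβ hF hKKT hΔ K
  set r := √(β * Δ)
  set s := √(Δ / (β * (K + 1)))
  have hN : (0 : ℝ) < K + 1 := by positivity
  have hΔ₀ : 0 ≤ Δ := nonneg_of_mul_nonneg_right
    ((admmNormSq_nonneg _ _ _).trans (by simpa only [mul_comm] using hΔ)) hβ
  have hlam₁ : ‖lam (K + 1)‖ ≤ ‖lamμ‖ + r :=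
    (norm_le_norm_add_norm_sub' _ lamμ).trans (by gcongr)
  have hx : β * ‖xμ - x (K + 1)‖ ≤ r + β * s := by
    calc β * ‖xμ - x (K + 1)‖
        ≤ β * (‖y (K + 1) - xμ‖ + ‖y (K + 1) - x (K + 1)‖) := by
          rw [norm_sub_rev (y (K + 1)) xμ]; gcongr; exact norm_sub_le_norm_sub_add_norm_sub _ _ _
      _ ≤ r + β * s := by rw [mul_add]; gcongr
  have hrs : r * s = Δ / √(K + 1) := by
    rw [← Real.sqrt_mul (by positivity),
      show β * Δ * (Δ / (β * (K + 1))) = Δ ^ 2 / (K + 1) by field_simp,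
      Real.sqrt_div' _ hN.le, Real.sqrt_sq hΔ₀]
  have hss : β * s * s = Δ / (K + 1) := by
    rw [mul_assoc, Real.mul_self_sqrt (by positivity)]; field_simp
  calc ⟪F (x (K + 1)), x (K + 1) - xμ⟫ + g (y (K + 1)) - g xμ
      ≤ ⟪lam (K + 1), y (K + 1) - x (K + 1)⟫ + β * ⟪y (K + 1) - y K, xμ - x (K + 1)⟫ :=
        (h.1 K).gap_le hKKT.1
    _ ≤ ‖lam (K + 1)‖ * ‖y (K + 1) - x (K + 1)‖
          + ‖y (K + 1) - y K‖ * (β * ‖xμ - x (K + 1)‖) := by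
        rw [mul_left_comm]
        gcongr
        · exact real_inner_le_norm _ _
        · exact real_inner_le_norm _ _
    _ ≤ (‖lamμ‖ + r) * s + s * (r + β * s) := by gcongr
    _ = Δ / (K + 1) + 2 * Δ / √(K + 1) + ‖lamμ‖ * s := by linear_combination 2 * hrs + hss

end ADMM

/-- Theorem 3.2, Eq. (3.24): two-sided value bounds for the last iterate. -/
theorem stmt_13 {n p : ℕ} (C : Matrix (Fin p) (Fin n) ℝ) (d : EuclideanSpace ℝ (Fin p))
    (F : EuclideanSpace ℝ (Fin n) → EuclideanSpace ℝ (Fin n))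
    (g : EuclideanSpace ℝ (Fin n) → ℝ) (β : ℝ) (hβ : 0 < β)
    (hF : MonotoneOnSet F (CeqSet C d))
    (xμ yμ lamμ : EuclideanSpace ℝ (Fin n))
    (hKKT : IsKKTPoint F g (CeqSet C d) xμ lamμ) (hyμ : yμ = xμ)
    (x y lam : ℕ → EuclideanSpace ℝ (Fin n))
    (htraj : IsADMMTraj F g β (CeqSet C d) x y lam)
    (Δ : ℝ) (hΔ : Δ = (1 / β) * ‖lam 0 - lamμ‖ ^ 2 + β * ‖y 0 - yμ‖ ^ 2) :
    ∀ K : ℕ,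
      -(‖lamμ‖ * Real.sqrt (Δ / (β * (K + 1)))) ≤
          ⟪F xμ, x (K+1) - xμ⟫ + g (y (K+1)) - g yμ ∧
      ⟪F xμ, x (K+1) - xμ⟫ + g (y (K+1)) - g yμ ≤
          ⟪F (x (K+1)), x (K+1) - xμ⟫ + g (y (K+1)) - g yμ ∧
      ⟪F (x (K+1)), x (K+1) - xμ⟫ + g (y (K+1)) - g yμ ≤
          Δ / (K + 1) + 2 * Δ / Real.sqrt (K + 1)
            + ‖lamμ‖ * Real.sqrt (Δ / (β * (K + 1))) := by
  subst yμ
  have hΔ₀ : admmNormSq β (lam 0 - lamμ) (y 0 - xμ) = β * Δ := by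
    rw [hΔ, admmNormSq]; field_simp
  intro K
  have hmono := hF (x (K + 1)) (htraj.1 K).1 xμ hKKT.1
  rw [inner_sub_left] at hmono
  exact ⟨htraj.neg_le_gap hβ hF hKKT hΔ₀.le K, by linarith, htraj.gap_le hβ hF hKKT hΔ₀.le K⟩
end
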